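/- arXiv:1606.07273 — 2 statements merged into one kernel-verified Lean document; each statement's English description precedes it below -/
import Mathlib

section
/- Define g : ℝ → ℂ by g(x) := -((α₊+α₋)/2)·exp((α₊+α₋)|x|). Then ∫_ℝ g(x) dx = 1, the one-sided derivatives g'(0⁺) and g'(0⁻) exist with g'(0⁺) = -(α₊+α₋)²/2 and g'(0⁻) = (α₊+α₋)²/2, and for any function κ : (0, ε₀) → ℂ such that for every ε ∈ (0, ε₀) one has (α₊+2κ(ε))(α₋+2κ(ε)) = α₊α₋·e^{-4κ(ε)ε} and κ(ε) → κ₀ as ε → 0⁺, the eigenvalue λ_ε := -κ(ε)² satisfies λ_ε = λ₀ + [α₊·g'(0⁺) - α₋·g'(0⁻) - (α₊²+α₋²)·g(0)]·ε + O(ε²) as ε → 0⁺. -/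
/-!
With `κ₀ = -(α₊ + α₋)/2` and `z = -4κε`, the secular equation
`(α₊ + 2κ)(α₋ + 2κ) = α₊α₋ e^z` rearranges to `4κ (κ - κ₀ + α₊α₋ε) = α₊α₋ (e^z - 1 - z)`.
Since `κ → κ₀ ≠ 0`, `z = O(ε)` and `e^z - 1 - z = O(z²)`, this gives `κ = κ₀ - α₊α₋ε + O(ε²)`,
hence `-κ² = -κ₀² + 2κ₀α₊α₋ε + O(ε²)`. The statements about `g` reduce to `exp(s x)` and
`exp(-s x)` on the two half-lines.
-/

open MeasureTheory Set

open Filter Topology Asymptotics Complex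

theorem hasDerivAt_cexp_mul_ofReal (c : ℂ) (x : ℝ) :
    HasDerivAt (fun x : ℝ => cexp (c * x)) (cexp (c * x) * c) x := by
  simpa using ((hasDerivAt_id x).ofReal_comp.const_mul c).cexp

theorem hasDerivWithinAt_cexp_mul_abs_Ioi (c : ℂ) :
    HasDerivWithinAt (fun x : ℝ => cexp (c * |x|)) c (Ioi 0) 0 := by
  refine ((hasDerivAt_cexp_mul_ofReal c 0).hasDerivWithinAt.congr
    (fun x hx => ?_) ?_).congr_deriv ?_
  · rw [abs_of_pos hx]
  · simp
  · simp

theorem hasDerivWithinAt_cexp_mul_abs_Iio (c : ℂ) :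
    HasDerivWithinAt (fun x : ℝ => cexp (c * |x|)) (-c) (Iio 0) 0 := by
  refine ((hasDerivAt_cexp_mul_ofReal (-c) 0).hasDerivWithinAt.congr
    (fun x hx => ?_) ?_).congr_deriv ?_
  · rw [abs_of_neg hx, ofReal_neg, mul_neg, neg_mul]
  · simp
  · simp

theorem integral_cexp_mul_abs {c : ℂ} (hc : c.re < 0) :
    ∫ x : ℝ, cexp (c * |x|) = -2 / c := by
  have hIoi : EqOn (fun x : ℝ => cexp (c * |x|)) (fun x : ℝ => cexp (c * x)) (Ioi 0) :=
    fun x hx => by simp only [abs_of_pos (mem_Ioi.mp hx)]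
  have hIic : EqOn (fun x : ℝ => cexp (c * |x|)) (fun x : ℝ => cexp (-c * x)) (Iic 0) :=
    fun x hx => by simp only [abs_of_nonpos (mem_Iic.mp hx), ofReal_neg, mul_neg, neg_mul]
  have hc' : 0 < (-c).re := by simpa using hc
  rw [← intervalIntegral.integral_Iic_add_Ioi
      ((integrableOn_exp_mul_complex_Iic hc' 0).congr_fun hIic.symm measurableSet_Iic)
      ((integrableOn_exp_mul_complex_Ioi hc 0).congr_fun hIoi.symm measurableSet_Ioi),
    setIntegral_congr_fun measurableSet_Iic hIic, setIntegral_congr_fun measurableSet_Ioi hIoi,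
    integral_exp_mul_complex_Iic hc', integral_exp_mul_complex_Ioi hc]
  simp only [ofReal_zero, mul_zero, exp_zero]
  ring

theorem isBigO_cexp_sub_one_sub_id : (fun z => cexp z - 1 - z) =O[𝓝 0] (· ^ 2) := by
  simpa [Finset.sum_range_succ, sub_sub] using Complex.exp_sub_sum_range_isBigO_pow 2

theorem Asymptotics.IsBigO.exists_bound_Ioo {E F : Type*} [Norm E] [SeminormedAddCommGroup F]
    {f : ℝ → E} {g : ℝ → F} {a : ℝ} (h : f =O[𝓝[>] a] g) {b : ℝ} (hab : a < b) :
    ∃ b' : ℝ, a < b' ∧ b' ≤ b ∧ ∃ C > (0 : ℝ), ∀ x ∈ Ioo a b', ‖f x‖ ≤ C * ‖g x‖ := by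
  obtain ⟨C, hC, hfg⟩ := h.exists_pos
  obtain ⟨b', hb', hsub⟩ := (mem_nhdsGT_iff_exists_mem_Ioc_Ioo_subset hab).mp hfg.bound
  exact ⟨b', hb'.1, hb'.2, C, hC, hsub⟩

section SecularEquation

variable {a b : ℂ} {κ : ℝ → ℂ}

theorem add_half_add_mul_eq_of_mul_eq_exp {ε : ℝ} (hκ : κ ε ≠ 0)
    (h : (a + 2 * κ ε) * (b + 2 * κ ε) = a * b * cexp (-4 * κ ε * ε)) :
    κ ε + (a + b) / 2 + a * b * ε =
      a * b / 4 * (cexp (-4 * κ ε * ε) - 1 - -4 * κ ε * ε) * (κ ε)⁻¹ := by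
  rw [eq_mul_inv_iff_mul_eq₀ hκ]
  linear_combination h / 4

variable (hab : a + b ≠ 0)
  (heq : ∀ᶠ ε in 𝓝[>] 0, (a + 2 * κ ε) * (b + 2 * κ ε) = a * b * cexp (-4 * κ ε * ε))
  (hκ : Tendsto κ (𝓝[>] 0) (𝓝 (-(a + b) / 2)))
include hab heq hκ

theorem isBigO_add_half_add_mul_sq :
    (fun ε : ℝ => κ ε + (a + b) / 2 + a * b * ε) =O[𝓝[>] 0] (· ^ 2) := by
  have hκ₀ : -(a + b) / 2 ≠ 0 := div_ne_zero (neg_ne_zero.2 hab) two_ne_zero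
  have hofReal : (fun ε : ℝ => (ε : ℂ)) =O[𝓝[>] 0] (fun ε : ℝ => ε) :=
    isBigO_of_le _ fun ε => by simp
  have hz : (fun ε : ℝ => -4 * κ ε * ε) =O[𝓝[>] 0] (fun ε : ℝ => ε) := by
    simpa using ((hκ.isBigO_one ℝ).const_mul_left (-4)).mul hofReal
  have hz₀ : Tendsto (fun ε : ℝ => -4 * κ ε * ε) (𝓝[>] 0) (𝓝 0) := by
    simpa using (hκ.const_mul (-4)).mul
      ((continuous_ofReal.tendsto' 0 0 ofReal_zero).mono_left nhdsWithin_le_nhds)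
  have hR := (isBigO_cexp_sub_one_sub_id.comp_tendsto hz₀).trans (hz.pow 2)
  have hinv := (hκ.inv₀ hκ₀).isBigO_one ℝ
  refine ((hR.const_mul_left (a * b / 4)).mul hinv).congr' ?_ (by simp)
  filter_upwards [heq, hκ.eventually_ne hκ₀] with ε hε hne
  exact (add_half_add_mul_eq_of_mul_eq_exp hne hε).symm

theorem isBigO_neg_sq_sub_first_order :
    (fun ε : ℝ => -κ ε ^ 2 - (-(a + b) ^ 2 / 4 - (a + b) * a * b * ε)) =O[𝓝[>] 0] (· ^ 2) := by
  have hD := isBigO_add_half_add_mul_sq hab heq hκ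
  have hsq : (fun ε : ℝ => ε ^ 2) =O[𝓝[>] 0] (fun ε : ℝ => ε) := by
    simpa using ((isLittleO_pow_pow one_lt_two).isBigO.mono nhdsWithin_le_nhds :
      (fun ε : ℝ => ε ^ 2) =O[𝓝[>] 0] fun ε => ε ^ 1)
  have hδ : (fun ε : ℝ => κ ε + (a + b) / 2) =O[𝓝[>] 0] (fun ε : ℝ => ε) := by
    have hlin : (fun ε : ℝ => a * b * ε) =O[𝓝[>] 0] (fun ε : ℝ => ε) :=
      (isBigO_of_le _ fun ε => by simp).const_mul_left (a * b)
    simpa using (hD.trans hsq).sub hlin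
  refine ((hD.const_mul_left (a + b)).sub (hδ.pow 2)).congr (fun ε => ?_) (fun _ => rfl)
  ring

end SecularEquation

/-- The function `g = ψ₀²` with `g(x) = -((α₊+α₋)/2) exp((α₊+α₋)|x|)` satisfies
`∫ g = 1`, has one-sided derivatives `g'(0⁺) = -(α₊+α₋)²/2`, `g'(0⁻) = (α₊+α₋)²/2`,
and the eigenvalue `λ_ε = -κ(ε)²` of the two-delta operator satisfies
`λ_ε = λ₀ + [α₊ g'(0⁺) - α₋ g'(0⁻) - (α₊²+α₋²) g(0)] ε + O(ε²)` as `ε → 0⁺`. -/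
theorem stmt_7 (αp αm : ℂ) (hα : (αp + αm).re < 0) :
    let g : ℝ → ℂ := fun x => -((αp + αm) / 2) * Complex.exp ((αp + αm) * (|x| : ℝ))
    ∃ Dp Dm : ℂ,
      HasDerivWithinAt g Dp (Ioi (0 : ℝ)) 0 ∧ HasDerivWithinAt g Dm (Iio (0 : ℝ)) 0 ∧
      Dp = -(αp + αm) ^ 2 / 2 ∧ Dm = (αp + αm) ^ 2 / 2 ∧
      (∫ x : ℝ, g x) = 1 ∧
      ∀ ε₀ > (0 : ℝ), ∀ κ : ℝ → ℂ,
        (∀ ε ∈ Ioo (0 : ℝ) ε₀,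
          (αp + 2 * κ ε) * (αm + 2 * κ ε) = αp * αm * Complex.exp (-4 * κ ε * ε)) →
        Filter.Tendsto κ (nhdsWithin 0 (Ioi (0 : ℝ))) (nhds (-(αp + αm) / 2)) →
        ∃ ε₁ : ℝ, 0 < ε₁ ∧ ε₁ ≤ ε₀ ∧ ∃ C > (0 : ℝ), ∀ ε ∈ Ioo (0 : ℝ) ε₁,
          ‖(-(κ ε) ^ 2 -
            (-(αp + αm) ^ 2 / 4 +
              (αp * Dp - αm * Dm - (αp ^ 2 + αm ^ 2) * g 0) * ε))‖ ≤ C * ε ^ 2 := by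
  intro g
  have hs : αp + αm ≠ 0 := fun h => by simp [h] at hα
  refine ⟨_, _, (hasDerivWithinAt_cexp_mul_abs_Ioi _).const_mul _,
    (hasDerivWithinAt_cexp_mul_abs_Iio _).const_mul _, by ring, by ring, ?_, ?_⟩
  · rw [integral_const_mul, integral_cexp_mul_abs hα]
    field_simp
  · intro ε₀ hε₀ κ heq hκ
    obtain ⟨ε₁, hε₁, hε₁ε₀, C, hC, hbound⟩ :=
      (isBigO_neg_sq_sub_first_order hs (eventually_of_mem (Ioo_mem_nhdsGT hε₀) heq)
        hκ).exists_bound_Ioo hε₀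
    refine ⟨ε₁, hε₁, hε₁ε₀, C, hC, fun ε hε => ?_⟩
    convert hbound ε hε using 2
    -- the coefficient `α₊ g'(0⁺) - α₋ g'(0⁻) - (α₊² + α₋²) g(0)` equals `-(α₊ + α₋) α₊ α₋`
    · simp only [g, abs_zero, ofReal_zero, mul_zero, exp_zero, mul_one]
      ring
    · simp only [norm_pow, Real.norm_eq_abs, sq_abs]
end

section
/- There exist ε₀ > 0 and C > 0 such that for every ε ∈ (0, ε₀) there exist λ_ε ∈ ℂ and a function ψ : ℝ → ℂ, not identically zero, with the following properties: ψ is continuous on ℝ and square-integrable; ψ is twice differentiable on ℝ∖{-ε, ε} with -ψ''(x) = λ_ε·ψ(x) for every x ∉ {-ε, ε}; the one-sided derivatives of ψ at ±ε exist and satisfy ψ'(ε⁺) - ψ'(ε⁻) = α₊·ψ(ε) and ψ'(-ε⁺) - ψ'(-ε⁻) = α₋·ψ(-ε); and |λ_ε - λ₀ + (α₊+α₋)α₊α₋·ε| ≤ C·ε². -/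
/-!
For `Re k > 0`, gluing `C e^{kx}` on `(-∞, -ε]`, `A e^{kx} + B e^{-kx}` on `(-ε, ε]` and `D e^{-kx}`
on `(ε, ∞)` gives a square-integrable solution of `-ψ'' = -k² ψ`; continuity and the jump
condition at `-ε` fix `A, B, D`, and the jump condition at `ε` then becomes the secular equation
`(2k + α₊)(2k + α₋) e^{4kε} = α₊α₋`. With `k₀ = -(α₊ + α₋)/2` (so `Re k₀ > 0` and `λ₀ = -k₀²`) it
reads `k = k₀ + α₊α₋ (e^{-4εk} - 1)/(4k)`. The correction term is at most `2|α₊α₋|ε` in size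
and has derivative `O(ε²)`, so the right-hand side contracts the disc of that radius about `k₀`; its
fixed point satisfies `k = k₀ - α₊α₋ε + O(ε²)`, and `λ_ε = -k²` has the claimed expansion.
-/

open MeasureTheory Set Filter Topology Metric Complex

noncomputable section

section Piecewise

variable {E : Type*} {a b : ℝ} {f g h : ℝ → E}

def piecewise3 (a b : ℝ) (f g h : ℝ → E) (x : ℝ) : E :=
  if x ≤ a then f x else if x ≤ b then g x else h x

theorem piecewise3_eqOn_Iic : EqOn (piecewise3 a b f g h) f (Iic a) := fun _ hx =>
  if_pos hx

theorem piecewise3_eqOn_Ioc : EqOn (piecewise3 a b f g h) g (Ioc a b) := fun _ hx => by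
  simp [piecewise3, not_le.2 hx.1, hx.2]

theorem piecewise3_eqOn_Ioi (hab : a ≤ b) : EqOn (piecewise3 a b f g h) h (Ioi b) :=
  fun _ hx => by simp [piecewise3, not_le.2 (hab.trans_lt hx), not_le.2 (mem_Ioi.1 hx)]

variable [NormedAddCommGroup E]

theorem continuous_piecewise3 (hab : a ≤ b) (hf : Continuous f) (hg : Continuous g)
    (hh : Continuous h) (hfg : f a = g a) (hgh : g b = h b) :
    Continuous (piecewise3 a b f g h) :=
  Continuous.if_le hf (Continuous.if_le hg hh continuous_id continuous_const
      fun x hx => by rw [hx, hgh])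
    continuous_id continuous_const fun x hx => by rw [hx, if_pos hab, hfg]

theorem memLp_two_piecewise3 (hab : a ≤ b) (hψ : Continuous (piecewise3 a b f g h))
    (hf : IntegrableOn (fun x => ‖f x‖ ^ 2) (Iic a))
    (hh : IntegrableOn (fun x => ‖h x‖ ^ 2) (Ioi b)) :
    MemLp (piecewise3 a b f g h) 2 := by
  refine (memLp_two_iff_integrable_sq_norm hψ.aestronglyMeasurable).2 ?_
  have hleft : IntegrableOn (fun x => ‖piecewise3 a b f g h x‖ ^ 2) (Iic a) :=
    hf.congr_fun (fun x hx => by rw [piecewise3_eqOn_Iic hx]) measurableSet_Iic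
  have hright : IntegrableOn (fun x => ‖piecewise3 a b f g h x‖ ^ 2) (Ioi b) :=
    hh.congr_fun (fun x hx => by rw [piecewise3_eqOn_Ioi hab hx]) measurableSet_Ioi
  have hmid : IntegrableOn (fun x => ‖piecewise3 a b f g h x‖ ^ 2) (Icc a b) :=
    (hψ.norm.pow 2).integrableOn_Icc
  rw [← integrableOn_univ, ← Iic_union_Ioi (a := b), ← Iic_union_Icc_eq_Iic hab]
  exact (hleft.union hmid).union hright

variable [NormedSpace ℝ E] {f' g' h' : E}

theorem hasDerivWithinAt_piecewise3_Iio_left (hf : HasDerivAt f f' a) :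
    HasDerivWithinAt (piecewise3 a b f g h) f' (Iio a) a :=
  (hf.hasDerivWithinAt.congr_of_mem piecewise3_eqOn_Iic self_mem_Iic).mono Iio_subset_Iic_self

theorem hasDerivWithinAt_piecewise3_Ioi_left (hab : a < b) (hfg : f a = g a)
    (hg : HasDerivAt g g' a) : HasDerivWithinAt (piecewise3 a b f g h) g' (Ioi a) a :=
  (hg.hasDerivWithinAt.congr piecewise3_eqOn_Ioc (by rw [← hfg]; exact if_pos le_rfl))
    |>.mono_of_mem_nhdsWithin (Ioc_mem_nhdsGT hab)

theorem hasDerivWithinAt_piecewise3_Iio_right (hab : a < b) (hg : HasDerivAt g g' b) :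
    HasDerivWithinAt (piecewise3 a b f g h) g' (Iio b) b :=
  (hg.hasDerivWithinAt.congr_of_mem piecewise3_eqOn_Ioc ⟨hab, le_rfl⟩)
    |>.mono_of_mem_nhdsWithin (Ioc_mem_nhdsLT hab)

theorem hasDerivWithinAt_piecewise3_Ioi_right (hab : a < b) (hgh : g b = h b)
    (hh : HasDerivAt h h' b) : HasDerivWithinAt (piecewise3 a b f g h) h' (Ioi b) b :=
  hh.hasDerivWithinAt.congr (piecewise3_eqOn_Ioi hab.le)
    (by rw [← hgh]; exact piecewise3_eqOn_Ioc ⟨hab, le_rfl⟩)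

end Piecewise

def expCombo (k A B : ℂ) (x : ℝ) : ℂ := A * exp (k * x) + B * exp (-k * x)

theorem hasDerivAt_expCombo (k A B : ℂ) (x : ℝ) :
    HasDerivAt (expCombo k A B) (expCombo k (k * A) (-(k * B)) x) x := by
  have hlin (c : ℂ) : HasDerivAt (fun y : ℝ => c * (y : ℂ)) c x := by
    simpa using (hasDerivAt_id x).ofReal_comp.const_mul c
  refine (((hlin k).cexp.const_mul A).add ((hlin (-k)).cexp.const_mul B)).congr_deriv ?_
  simp only [expCombo]
  ring

theorem continuous_expCombo (k A B : ℂ) : Continuous (expCombo k A B) :=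
  continuous_iff_continuousAt.2 fun x => (hasDerivAt_expCombo k A B x).continuousAt

theorem expCombo_ode_of_eventuallyEq {ψ : ℝ → ℂ} {k A B : ℂ} {x : ℝ}
    (hψ : ψ =ᶠ[𝓝 x] expCombo k A B) :
    DifferentiableAt ℝ ψ x ∧ DifferentiableAt ℝ (deriv ψ) x ∧
      -deriv (deriv ψ) x = -k ^ 2 * ψ x := by
  have hderiv : deriv ψ =ᶠ[𝓝 x] expCombo k (k * A) (-(k * B)) := by
    refine hψ.deriv.trans (Eventually.of_forall fun y => ?_)
    exact (hasDerivAt_expCombo k A B y).deriv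
  have h2 := hasDerivAt_expCombo k (k * A) (-(k * B)) x
  refine ⟨(hasDerivAt_expCombo k A B x).differentiableAt.congr_of_eventuallyEq hψ,
    h2.differentiableAt.congr_of_eventuallyEq hderiv, ?_⟩
  rw [(h2.congr_of_eventuallyEq hderiv).deriv, hψ.self_of_nhds]
  simp only [expCombo]
  ring

theorem integrableOn_Iic_norm_sq_expCombo {k : ℂ} (hk : 0 < k.re) (A : ℂ) (a : ℝ) :
    IntegrableOn (fun x => ‖expCombo k A 0 x‖ ^ 2) (Iic a) := by
  refine IntegrableOn.congr_fun ((integrableOn_exp_mul_complex_Iic (a := 2 * k)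
    (by simpa using hk) a).const_mul (A ^ 2)).norm (fun x _ => ?_) measurableSet_Iic
  rw [← norm_pow, expCombo, zero_mul, add_zero, mul_pow, ← exp_nat_mul]
  push_cast
  ring_nf

theorem integrableOn_Ioi_norm_sq_expCombo {k : ℂ} (hk : 0 < k.re) (B : ℂ) (b : ℝ) :
    IntegrableOn (fun x => ‖expCombo k 0 B x‖ ^ 2) (Ioi b) := by
  refine IntegrableOn.congr_fun ((integrableOn_exp_mul_complex_Ioi (a := -2 * k)
    (by simpa using hk) b).const_mul (B ^ 2)).norm (fun x _ => ?_) measurableSet_Ioi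
  rw [← norm_pow, expCombo, zero_mul, zero_add, mul_pow, ← exp_nat_mul]
  push_cast
  ring_nf

theorem expCombo_apply_eq (k A B : ℂ) (x : ℝ) :
    expCombo k A B x = A * exp (k * x) + B * (exp (k * x))⁻¹ := by
  rw [expCombo, neg_mul, exp_neg]

theorem expCombo_apply_neg_eq (k A B : ℂ) (x : ℝ) :
    expCombo k A B (-x) = A * (exp (k * x))⁻¹ + B * exp (k * x) := by
  rw [expCombo, ofReal_neg, mul_neg, neg_mul_neg, exp_neg]

def HasDeltaJump (ψ : ℝ → ℂ) (p : ℝ) (α : ℂ) : Prop :=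
  ∃ Dr Dl : ℂ, HasDerivWithinAt ψ Dr (Ioi p) p ∧ HasDerivWithinAt ψ Dl (Iio p) p ∧
    Dr - Dl = α * ψ p

section BoundState

variable (αp αm k : ℂ) (ε : ℝ)

def boundState : ℝ → ℂ :=
  piecewise3 (-ε) ε (expCombo k (2 * k * exp (k * ε) ^ 2) 0)
    (expCombo k ((2 * k + αm) * exp (k * ε) ^ 2) (-αm))
    (expCombo k 0 ((2 * k + αm) * exp (k * ε) ^ 4 - αm))

theorem boundState_match_neg :
    expCombo k (2 * k * exp (k * ε) ^ 2) 0 (-ε) =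
      expCombo k ((2 * k + αm) * exp (k * ε) ^ 2) (-αm) (-ε) := by
  rw [expCombo_apply_neg_eq, expCombo_apply_neg_eq]
  field_simp
  ring

theorem boundState_match_pos :
    expCombo k ((2 * k + αm) * exp (k * ε) ^ 2) (-αm) ε =
      expCombo k 0 ((2 * k + αm) * exp (k * ε) ^ 4 - αm) ε := by
  rw [expCombo_apply_eq, expCombo_apply_eq]
  field_simp
  ring

theorem boundState_neg_eps : boundState αm k ε (-ε) = 2 * k * exp (k * ε) := by
  rw [boundState, piecewise3_eqOn_Iic self_mem_Iic, expCombo_apply_neg_eq]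
  field_simp
  ring

theorem boundState_eps (hε : 0 < ε) :
    boundState αm k ε ε = (2 * k + αm) * exp (k * ε) ^ 3 - αm * (exp (k * ε))⁻¹ := by
  rw [boundState, piecewise3_eqOn_Ioc ⟨neg_lt_self hε, le_rfl⟩, expCombo_apply_eq]
  ring

theorem continuous_boundState (hε : 0 ≤ ε) : Continuous (boundState αm k ε) :=
  continuous_piecewise3 (neg_le_self hε) (continuous_expCombo _ _ _) (continuous_expCombo _ _ _)
    (continuous_expCombo _ _ _) (boundState_match_neg αm k ε) (boundState_match_pos αm k ε)

theorem memLp_boundState (hk : 0 < k.re) (hε : 0 ≤ ε) : MemLp (boundState αm k ε) 2 :=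
  memLp_two_piecewise3 (neg_le_self hε) (continuous_boundState αm k ε hε)
    (integrableOn_Iic_norm_sq_expCombo hk _ _) (integrableOn_Ioi_norm_sq_expCombo hk _ _)

theorem boundState_ode (hε : 0 < ε) {x : ℝ} (hxm : x ≠ -ε) (hxp : x ≠ ε) :
    DifferentiableAt ℝ (boundState αm k ε) x ∧ DifferentiableAt ℝ (deriv (boundState αm k ε)) x ∧
      -deriv (deriv (boundState αm k ε)) x = -k ^ 2 * boundState αm k ε x := by
  rcases hxm.lt_or_gt with hx | hx
  · exact expCombo_ode_of_eventuallyEq <| eventuallyEq_of_mem (Iio_mem_nhds hx)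
      (piecewise3_eqOn_Iic.mono Iio_subset_Iic_self)
  rcases hxp.lt_or_gt with hx' | hx'
  · exact expCombo_ode_of_eventuallyEq <| eventuallyEq_of_mem (Ioo_mem_nhds hx hx')
      (piecewise3_eqOn_Ioc.mono Ioo_subset_Ioc_self)
  · exact expCombo_ode_of_eventuallyEq <| eventuallyEq_of_mem (Ioi_mem_nhds hx')
      (piecewise3_eqOn_Ioi (neg_le_self hε.le))

theorem hasDeltaJump_boundState_neg (hε : 0 < ε) :
    HasDeltaJump (boundState αm k ε) (-ε) αm := by
  refine ⟨_, _, hasDerivWithinAt_piecewise3_Ioi_left (neg_lt_self hε)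
    (boundState_match_neg αm k ε) (hasDerivAt_expCombo _ _ _ _),
    hasDerivWithinAt_piecewise3_Iio_left (hasDerivAt_expCombo _ _ _ _), ?_⟩
  rw [boundState_neg_eps, expCombo_apply_neg_eq, expCombo_apply_neg_eq]
  field_simp
  ring

theorem hasDeltaJump_boundState_pos (hε : 0 < ε)
    (hsec : (2 * k + αp) * (2 * k + αm) * exp (k * ε) ^ 4 = αp * αm) :
    HasDeltaJump (boundState αm k ε) ε αp := by
  refine ⟨_, _, hasDerivWithinAt_piecewise3_Ioi_right (neg_lt_self hε)
    (boundState_match_pos αm k ε) (hasDerivAt_expCombo _ _ _ _),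
    hasDerivWithinAt_piecewise3_Iio_right (neg_lt_self hε) (hasDerivAt_expCombo _ _ _ _), ?_⟩
  rw [boundState_eps αm k ε hε, expCombo_apply_eq, expCombo_apply_eq]
  field_simp
  linear_combination -hsec

end BoundState

section Secular

variable (c : ℂ) (ε : ℝ)

/-- The secular equation of `boundState` is `k = -(α₊ + α₋)/2 + secularCorrection (α₊ * α₋) ε k`. -/
def secularCorrection (k : ℂ) : ℂ := c * (exp (-(4 * ε * k)) - 1) / (4 * k)

variable {c ε} {k : ℂ}

theorem norm_four_mul_ofReal_mul (hε : 0 ≤ ε) : ‖(4 * ε * k : ℂ)‖ = 4 * ε * ‖k‖ := by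
  simp [abs_of_nonneg hε]

theorem norm_exp_neg_four_mul_ofReal_mul_le_one (hε : 0 ≤ ε) (hk : 0 < k.re) :
    ‖exp (-(4 * ε * k))‖ ≤ 1 := by
  rw [norm_exp, Real.exp_le_one_iff]
  simp only [neg_re, mul_re, mul_im, re_ofNat, im_ofNat, ofReal_re, ofReal_im]
  nlinarith

theorem norm_secularCorrection_le (hε : 0 ≤ ε) (hk : 0 < k.re) (hsmall : 4 * ε * ‖k‖ ≤ 1) :
    ‖secularCorrection c ε k‖ ≤ 2 * ‖c‖ * ε := by
  have hk0 : k ≠ 0 := ne_zero_of_re_pos hk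
  have hexp : ‖exp (-(4 * ε * k)) - 1‖ ≤ 2 * (4 * ε * ‖k‖) := by
    simpa only [norm_neg, norm_four_mul_ofReal_mul hε] using
      norm_exp_sub_one_le (x := -(4 * ε * k)) (by rwa [norm_neg, norm_four_mul_ofReal_mul hε])
  rw [secularCorrection, norm_div, norm_mul, norm_mul, div_le_iff₀ (by simp [hk0])]
  calc ‖c‖ * ‖exp (-(4 * ε * k)) - 1‖ ≤ ‖c‖ * (2 * (4 * ε * ‖k‖)) := by gcongr
    _ = 2 * ‖c‖ * ε * (‖(4 : ℂ)‖ * ‖k‖) := by norm_num; ring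

theorem norm_secularCorrection_add_le (hε : 0 ≤ ε) (hk : 0 < k.re)
    (hsmall : 4 * ε * ‖k‖ ≤ 1) :
    ‖secularCorrection c ε k + c * ε‖ ≤ 4 * ‖c‖ * ε ^ 2 * ‖k‖ := by
  have hk0 : k ≠ 0 := ne_zero_of_re_pos hk
  have hexp : ‖exp (-(4 * ε * k)) - 1 - -(4 * ε * k)‖ ≤ (4 * ε * ‖k‖) ^ 2 := by
    simpa only [norm_neg, norm_four_mul_ofReal_mul hε] using
      norm_exp_sub_one_sub_id_le (x := -(4 * ε * k))
        (by rwa [norm_neg, norm_four_mul_ofReal_mul hε])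
  have hid : secularCorrection c ε k + c * ε =
      c * (exp (-(4 * ε * k)) - 1 - -(4 * ε * k)) / (4 * k) := by
    rw [secularCorrection]
    field_simp
    ring
  rw [hid, norm_div, norm_mul, norm_mul, div_le_iff₀ (by simp [hk0])]
  calc ‖c‖ * ‖exp (-(4 * ε * k)) - 1 - -(4 * ε * k)‖ ≤ ‖c‖ * (4 * ε * ‖k‖) ^ 2 := by gcongr
    _ = 4 * ‖c‖ * ε ^ 2 * ‖k‖ * (‖(4 : ℂ)‖ * ‖k‖) := by norm_num; ring

/-- The derivative is written through `e^z - 1 - z`, `z = 4εk`, to make its size `O(ε²)` visible. -/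
theorem hasDerivAt_secularCorrection (hk : k ≠ 0) :
    HasDerivAt (secularCorrection c ε)
      (c * exp (-(4 * ε * k)) * (exp (4 * ε * k) - 1 - 4 * ε * k) / (4 * k ^ 2)) k := by
  have hexp : HasDerivAt (fun z => exp (-(4 * ε * z))) (exp (-(4 * ε * k)) * -(4 * ε)) k := by
    simpa using ((hasDerivAt_id' k).const_mul (-(4 * (ε : ℂ)))).cexp
  refine ((hexp.sub_const 1).const_mul c |>.div ((hasDerivAt_id' k).const_mul 4)
    (by simpa using hk)).congr_deriv ?_
  have hinv : exp (-(4 * ε * k)) * exp (4 * ε * k) = 1 := by rw [← exp_add]; simp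
  field_simp
  linear_combination -c * hinv

theorem norm_deriv_secularCorrection_le (hε : 0 ≤ ε) (hk : 0 < k.re)
    (hsmall : 4 * ε * ‖k‖ ≤ 1) :
    ‖c * exp (-(4 * ε * k)) * (exp (4 * ε * k) - 1 - 4 * ε * k) / (4 * k ^ 2)‖ ≤
      4 * ‖c‖ * ε ^ 2 := by
  have hk0 : k ≠ 0 := ne_zero_of_re_pos hk
  have hexp : ‖exp (4 * ε * k) - 1 - 4 * ε * k‖ ≤ (4 * ε * ‖k‖) ^ 2 := by
    rw [← norm_four_mul_ofReal_mul hε]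
    exact norm_exp_sub_one_sub_id_le (by rwa [norm_four_mul_ofReal_mul hε])
  rw [norm_div, norm_mul, norm_mul, norm_mul, norm_pow, div_le_iff₀ (by simp [hk0])]
  calc ‖c‖ * ‖exp (-(4 * ε * k))‖ * ‖exp (4 * ε * k) - 1 - 4 * ε * k‖
      ≤ ‖c‖ * 1 * (4 * ε * ‖k‖) ^ 2 := by
        gcongr
        exact norm_exp_neg_four_mul_ofReal_mul_le_one hε hk
    _ = 4 * ‖c‖ * ε ^ 2 * (‖(4 : ℂ)‖ * ‖k‖ ^ 2) := by norm_num; ring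

end Secular

theorem re_pos_of_mem_closedBall {k k₀ : ℂ} {R : ℝ} (hk : k ∈ closedBall k₀ R)
    (hR : R < k₀.re) : 0 < k.re := by
  have h := neg_le_of_abs_le ((abs_re_le_norm (k - k₀)).trans (mem_closedBall_iff_norm.1 hk))
  rw [sub_re] at h
  linarith

theorem exists_eq_add_secularCorrection (k₀ c : ℂ) {ε : ℝ} (hε : 0 ≤ ε)
    (hre : 2 * ‖c‖ * ε < k₀.re) (hsmall : 4 * ε * (‖k₀‖ + 2 * ‖c‖ * ε) ≤ 1)
    (hcontr : 4 * ‖c‖ * ε ^ 2 < 1) :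
    ∃ k ∈ closedBall k₀ (2 * ‖c‖ * ε), k = k₀ + secularCorrection c ε k := by
  set T := fun k => k₀ + secularCorrection c ε k
  have hball : ∀ k ∈ closedBall k₀ (2 * ‖c‖ * ε), 0 < k.re ∧ 4 * ε * ‖k‖ ≤ 1 := fun k hk =>
    ⟨re_pos_of_mem_closedBall hk hre,
      hsmall.trans' (by gcongr; exact norm_le_of_mem_closedBall hk)⟩
  have hmaps : MapsTo T (closedBall k₀ (2 * ‖c‖ * ε)) (closedBall k₀ (2 * ‖c‖ * ε)) :=
    fun k hk => by
      rw [mem_closedBall_iff_norm, add_sub_cancel_left]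
      exact norm_secularCorrection_le hε (hball k hk).1 (hball k hk).2
  have hlip : LipschitzOnWith (4 * ‖c‖ * ε ^ 2).toNNReal T
      (closedBall k₀ (2 * ‖c‖ * ε)) := by
    refine (convex_closedBall _ _).lipschitzOnWith_of_nnnorm_hasDerivWithin_le
      (fun k hk => ((hasDerivAt_secularCorrection (ne_zero_of_re_pos (hball k hk).1)).const_add
        k₀).hasDerivWithinAt) fun k hk => ?_
    rw [← NNReal.coe_le_coe, coe_nnnorm, Real.coe_toNNReal _ (by positivity)]
    exact norm_deriv_secularCorrection_le hε (hball k hk).1 (hball k hk).2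
  obtain ⟨k, hk, hfix, -⟩ := ContractingWith.exists_fixedPoint' isClosed_closedBall.isComplete
    hmaps ⟨Real.toNNReal_lt_one.2 hcontr, hlip.mapsToRestrict hmaps⟩
    (mem_closedBall_self (by positivity)) (edist_ne_top _ _)
  exact ⟨k, hk, hfix.symm⟩

theorem secular_of_eq_add_secularCorrection {αp αm k : ℂ} {ε : ℝ} (hk : k ≠ 0)
    (h : k = -(αp + αm) / 2 + secularCorrection (αp * αm) ε k) :
    (2 * k + αp) * (2 * k + αm) * exp (k * ε) ^ 4 = αp * αm := by
  have hinv : exp (-(4 * ε * k)) * exp (k * ε) ^ 4 = 1 := by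
    rw [← exp_nat_mul, ← exp_add]
    push_cast
    ring_nf
    exact exp_zero
  rw [secularCorrection] at h
  generalize exp (-(4 * ε * k)) = X at h hinv
  field_simp at h
  linear_combination (exp (k * ε) ^ 4 / 2) * h + αp * αm * hinv

theorem norm_neg_sq_sub_neg_sq_div_four_add_le {σ c k : ℂ} {ε A B : ℝ}
    (h₁ : ‖k - -σ / 2‖ ≤ A) (h₂ : ‖k - -σ / 2 + c * ε‖ ≤ B) :
    ‖-k ^ 2 - -σ ^ 2 / 4 + σ * c * ε‖ ≤ A ^ 2 + ‖σ‖ * B := by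
  have hid : -k ^ 2 - -σ ^ 2 / 4 + σ * c * ε =
      -(k - -σ / 2) ^ 2 + σ * (k - -σ / 2 + c * ε) := by ring
  rw [hid]
  refine (norm_add_le _ _).trans ?_
  rw [norm_neg, norm_pow, norm_mul]
  gcongr

theorem exists_secular_root (αp αm : ℂ) (hα : (αp + αm).re < 0) :
    ∃ ε₀ > (0 : ℝ), ∃ C > (0 : ℝ), ∀ ε ∈ Ioo (0 : ℝ) ε₀, ∃ k : ℂ, 0 < k.re ∧
      (2 * k + αp) * (2 * k + αm) * exp (k * ε) ^ 4 = αp * αm ∧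
      ‖-k ^ 2 - -(αp + αm) ^ 2 / 4 + (αp + αm) * αp * αm * ε‖ ≤ C * ε ^ 2 := by
  set k₀ : ℂ := -(αp + αm) / 2
  set P := ‖αp * αm‖
  set M := ‖k₀‖ + k₀.re
  have hρ : 0 < k₀.re := by simp only [k₀, div_ofNat_re, neg_re]; linarith
  have hM : 0 < M := by positivity
  refine ⟨min (k₀.re / (2 * P + 1)) (1 / (4 * M + 4 * P + 1)), by positivity,
    4 * P ^ 2 + ‖αp + αm‖ * (4 * P * M) + 1, by positivity, ?_⟩
  rintro ε ⟨hε, hεlt⟩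
  have h₁ : (2 * P + 1) * ε < k₀.re :=
    (lt_div_iff₀' (by positivity)).1 (hεlt.trans_le (min_le_left _ _))
  have h₂ : (4 * M + 4 * P + 1) * ε < 1 :=
    (lt_div_iff₀' (by positivity)).1 (hεlt.trans_le (min_le_right _ _))
  have hP : 0 ≤ P := norm_nonneg _
  have hR : 2 * P * ε < k₀.re := by nlinarith
  have hMε : 4 * M * ε < 1 := by nlinarith
  have hsmall₀ : 4 * ε * (‖k₀‖ + 2 * P * ε) ≤ 1 := by nlinarith
  have hcontr : 4 * P * ε ^ 2 < 1 := by nlinarith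
  obtain ⟨k, hk, hfix⟩ :=
    exists_eq_add_secularCorrection k₀ (αp * αm) hε.le hR hsmall₀ hcontr
  have hkre := re_pos_of_mem_closedBall hk hR
  have hkM : ‖k‖ ≤ M := (norm_le_of_mem_closedBall hk).trans (by linarith)
  have hsmall : 4 * ε * ‖k‖ ≤ 1 := by nlinarith [mul_le_mul_of_nonneg_left hkM hε.le]
  refine ⟨k, hkre, secular_of_eq_add_secularCorrection (ne_zero_of_re_pos hkre) hfix, ?_⟩
  have hδ : k - k₀ = secularCorrection (αp * αm) ε k := sub_eq_of_eq_add' hfix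
  rw [mul_assoc (αp + αm)]
  calc _ ≤ (2 * P * ε) ^ 2 + ‖αp + αm‖ * (4 * P * ε ^ 2 * M) := by
        refine norm_neg_sq_sub_neg_sq_div_four_add_le ?_ ?_
        · rw [hδ]
          exact norm_secularCorrection_le hε.le hkre hsmall
        · rw [hδ]
          exact (norm_secularCorrection_add_le hε.le hkre hsmall).trans (by gcongr)
    _ ≤ (4 * P ^ 2 + ‖αp + αm‖ * (4 * P * M) + 1) * ε ^ 2 := by nlinarith [norm_nonneg (αp + αm)]

end

/-- Classical formulation of the one-dimensional main theorem: for all small `ε > 0`, the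
Schrödinger operator on the line with two delta interactions of couplings `α±` at `±ε`
has an eigenvalue `λ_ε` with eigenfunction `ψ` (continuous, square-integrable, satisfying
`-ψ'' = λ_ε ψ` away from `±ε` and the delta jump conditions at `±ε`), and
`λ_ε = λ₀ - (α₊+α₋)α₊α₋ ε + O(ε²)` with `λ₀ = -(α₊+α₋)²/4`. -/
theorem stmt_11 (αp αm : ℂ) (hα : (αp + αm).re < 0) :
    ∃ ε₀ > (0 : ℝ), ∃ C > (0 : ℝ), ∀ ε ∈ Ioo (0 : ℝ) ε₀,
      ∃ lam : ℂ, ∃ ψ : ℝ → ℂ,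
        (∃ x : ℝ, ψ x ≠ 0) ∧
        Continuous ψ ∧
        MemLp ψ 2 (volume : Measure ℝ) ∧
        (∀ x : ℝ, x ≠ -ε → x ≠ ε →
          DifferentiableAt ℝ ψ x ∧ DifferentiableAt ℝ (deriv ψ) x ∧
            -(deriv (deriv ψ) x) = lam * ψ x) ∧
        (∃ Dpp Dpm Dmp Dmm : ℂ,
          HasDerivWithinAt ψ Dpp (Ioi ε) ε ∧ HasDerivWithinAt ψ Dpm (Iio ε) ε ∧
          HasDerivWithinAt ψ Dmp (Ioi (-ε)) (-ε) ∧ HasDerivWithinAt ψ Dmm (Iio (-ε)) (-ε) ∧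
          Dpp - Dpm = αp * ψ ε ∧ Dmp - Dmm = αm * ψ (-ε)) ∧
        ‖lam - (-(αp + αm) ^ 2 / 4) + (αp + αm) * αp * αm * ε‖ ≤ C * ε ^ 2 := by
  obtain ⟨ε₀, hε₀, C, hC, hroot⟩ := exists_secular_root αp αm hα
  refine ⟨ε₀, hε₀, C, hC, fun ε hε => ?_⟩
  obtain ⟨k, hk, hsec, hbound⟩ := hroot ε hε
  obtain ⟨Dpp, Dpm, hpp, hpm, hjump_pos⟩ := hasDeltaJump_boundState_pos αp αm k ε hε.1 hsec
  obtain ⟨Dmp, Dmm, hmp, hmm, hjump_neg⟩ := hasDeltaJump_boundState_neg αm k ε hε.1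
  refine ⟨-k ^ 2, boundState αm k ε, ⟨-ε, ?_⟩, continuous_boundState αm k ε hε.1.le,
    memLp_boundState αm k ε hk hε.1.le, fun x => boundState_ode αm k ε hε.1,
    ⟨Dpp, Dpm, Dmp, Dmm, hpp, hpm, hmp, hmm, hjump_pos, hjump_neg⟩, hbound⟩
  rw [boundState_neg_eps]
  exact mul_ne_zero (mul_ne_zero two_ne_zero (ne_zero_of_re_pos hk)) (exp_ne_zero _)
end
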